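/- arXiv:1702.01432 — 5 statements merged into one kernel-verified Lean document; each statement's English description precedes it below -/
import Mathlib

section
/- If real numbers k and s, with k ≠ 0, satisfy (ks+1)/(k²+1) = -n/2 and (ks+1)/(s²+1) = -m/2 for some natural numbers n, m, then nm < 4. -/
/-!
Writing `x = ks + 1`, the hypotheses say `x = -(n/2)(k² + 1)` and `x = -(m/2)(s² + 1)`, so
`(nm/4)(k² + 1)(s² + 1) = x²`. By Lagrange's identity `(k² + 1)(s² + 1) - x² = (k - s)²`, and
`k ≠ s`, since for `k = s` the first equation would force `n = -2`. Hence `nm/4 < 1`.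
-/

lemma mul_add_one_sq_lt_of_ne {k s : ℝ} (hne : k ≠ s) :
    (k * s + 1) ^ 2 < (k ^ 2 + 1) * (s ^ 2 + 1) := by
  have lagrange : (k ^ 2 + 1) * (s ^ 2 + 1) - (k * s + 1) ^ 2 = (k - s) ^ 2 := by ring
  have : 0 < (k - s) ^ 2 := by
    have := sub_ne_zero.mpr hne
    positivity
  linarith

lemma mul_lt_one_of_sq_lt_mul {x a b c d : ℝ} (ha : 0 < a) (hb : 0 < b)
    (hxa : x = c * a) (hxb : x = d * b) (hx : x ^ 2 < a * b) : c * d < 1 := by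
  have hsq : x ^ 2 = c * d * (a * b) := by
    rw [sq]
    nth_rewrite 1 [hxa]
    rw [hxb]
    ring
  rw [hsq] at hx
  exact lt_of_mul_lt_mul_right (by linarith) (mul_pos ha hb).le

theorem stmt_0_general (k s : ℝ) (n m : ℕ)
    (h1 : (k * s + 1) / (k ^ 2 + 1) = -(n : ℝ) / 2)
    (h2 : (k * s + 1) / (s ^ 2 + 1) = -(m : ℝ) / 2) :
    n * m < 4 := by
  have hk : 0 < k ^ 2 + 1 := by positivity
  have hs : 0 < s ^ 2 + 1 := by positivity
  have e1 : k * s + 1 = -(n : ℝ) / 2 * (k ^ 2 + 1) := (div_eq_iff hk.ne').mp h1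
  have e2 : k * s + 1 = -(m : ℝ) / 2 * (s ^ 2 + 1) := (div_eq_iff hs.ne').mp h2
  have hne : k ≠ s := by
    rintro rfl
    have : 0 ≤ (n : ℝ) := n.cast_nonneg
    nlinarith
  have key := mul_lt_one_of_sq_lt_mul hk hs e1 e2 (mul_add_one_sq_lt_of_ne hne)
  have : (n : ℝ) * m < 4 := by linarith
  exact_mod_cast this

theorem stmt_0 (k s : ℝ) (hk : k ≠ 0) (n m : ℕ)
    (h1 : (k * s + 1) / (k ^ 2 + 1) = -(n : ℝ) / 2)
    (h2 : (k * s + 1) / (s ^ 2 + 1) = -(m : ℝ) / 2) :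
    n * m < 4 :=
  stmt_0_general k s n m h1 h2
end

section
/- For the pair of unit-direction frequency vectors v₁ = (1,k) and v₂ = (1,s) in ℝ² with k > 0 > s satisfying (ks+1)/(k²+1) ∈ -½ℕ and (ks+1)/(s²+1) ∈ -½ℕ, the angle between v₁ and v₂ lies in {π/2, 2π/3, 3π/4, 5π/6}. -/
/-!
Write `c` for the cosine of the angle. The two hypotheses give `1 + k s ≤ 0`, so `c ≤ 0`, and
their product gives `c² = n m / 4`. Two vectors with positive first coordinate are never
antiparallel, so `c > -1`; hence `n m ∈ {0, 1, 2, 3}` and `c = -√(n m) / 2`, whose arccos is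
one of the four listed angles.
-/

open Real

/-- The cosine of the angle between `(1, k)` and `(1, s)`. -/
noncomputable def cosAngleSlopes (k s : ℝ) : ℝ :=
  (1 + k * s) / (√(1 + k ^ 2) * √(1 + s ^ 2))

lemma cosAngleSlopes_sq (k s : ℝ) :
    cosAngleSlopes k s ^ 2 = (1 + k * s) ^ 2 / ((1 + k ^ 2) * (1 + s ^ 2)) := by
  rw [cosAngleSlopes, div_pow, mul_pow, sq_sqrt (by positivity), sq_sqrt (by positivity)]

lemma neg_one_lt_cosAngleSlopes (k s : ℝ) : -1 < cosAngleSlopes k s := by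
  by_cases hpos : 0 ≤ 1 + k * s
  · have : 0 ≤ cosAngleSlopes k s := by unfold cosAngleSlopes; positivity
    linarith
  have hks : k ≠ s := by
    rintro rfl
    nlinarith
  -- Lagrange's identity: `(1 + k s)² + (k - s)² = (1 + k²)(1 + s²)`.
  have hlt : (1 + k * s) ^ 2 < (1 + k ^ 2) * (1 + s ^ 2) := by
    nlinarith [sq_pos_of_ne_zero (sub_ne_zero.mpr hks)]
  have hsq : cosAngleSlopes k s ^ 2 < 1 ^ 2 := by
    rw [cosAngleSlopes_sq, one_pow, div_lt_one (by positivity)]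
    exact hlt
  exact (abs_lt_of_sq_lt_sq' hsq zero_le_one).1

lemma cosAngleSlopes_sq_eq {k s : ℝ} {n m : ℕ}
    (h1 : (k * s + 1) / (k ^ 2 + 1) = -(n : ℝ) / 2)
    (h2 : (k * s + 1) / (s ^ 2 + 1) = -(m : ℝ) / 2) :
    cosAngleSlopes k s ^ 2 = (n * m : ℕ) / 4 := by
  rw [div_eq_iff (by positivity)] at h1 h2
  rw [cosAngleSlopes_sq, div_eq_iff (by positivity)]
  push_cast
  linear_combination (1 + k * s) * h2 - ((m : ℝ) / 2 * (s ^ 2 + 1)) * h1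

lemma arccos_neg_cos {θ : ℝ} (h₀ : 0 ≤ θ) (hπ : θ ≤ π) : arccos (-cos θ) = π - θ := by
  rw [arccos_neg, arccos_cos h₀ hπ]

lemma arccos_neg_sqrt_nat_div_two_mem {j : ℕ} (hj : j < 4) :
    arccos (-(√j / 2)) ∈ ({π / 2, 2 * π / 3, 3 * π / 4, 5 * π / 6} : Set ℝ) := by
  have hπ := pi_pos
  simp only [Set.mem_insert_iff, Set.mem_singleton_iff]
  interval_cases j
  · left
    simp
  · right; left
    rw [Nat.cast_one, sqrt_one, ← cos_pi_div_three, arccos_neg_cos (by positivity) (by linarith)]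
    ring
  · right; right; left
    rw [Nat.cast_ofNat, ← cos_pi_div_four, arccos_neg_cos (by positivity) (by linarith)]
    ring
  · right; right; right
    rw [Nat.cast_ofNat, ← cos_pi_div_six, arccos_neg_cos (by positivity) (by linarith)]
    ring

lemma eq_neg_sqrt_nat_div_two {c : ℝ} {j : ℕ} (hc : c ≤ 0) (h : c ^ 2 = j / 4) :
    c = -(√j / 2) := by
  have : √j / 2 = -c := by
    rw [← abs_of_nonpos hc, ← sqrt_sq_eq_abs, h, sqrt_div' _ (by norm_num : (0 : ℝ) ≤ 4),
      show (4 : ℝ) = 2 ^ 2 by norm_num, sqrt_sq zero_le_two]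
  linarith

theorem stmt_2_general (k s : ℝ) (n m : ℕ)
    (h1 : (k * s + 1) / (k ^ 2 + 1) = -(n : ℝ) / 2)
    (h2 : (k * s + 1) / (s ^ 2 + 1) = -(m : ℝ) / 2) :
    Real.arccos ((1 + k * s) / (Real.sqrt (1 + k ^ 2) * Real.sqrt (1 + s ^ 2))) ∈
      ({π / 2, 2 * π / 3, 3 * π / 4, 5 * π / 6} : Set ℝ) := by
  change arccos (cosAngleSlopes k s) ∈ _
  have hnum : 1 + k * s ≤ 0 := by
    rw [div_eq_iff (by positivity)] at h1
    nlinarith [n.cast_nonneg (α := ℝ), sq_nonneg k]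
  have hc : cosAngleSlopes k s ≤ 0 := div_nonpos_of_nonpos_of_nonneg hnum (by positivity)
  have hc2 := cosAngleSlopes_sq_eq h1 h2
  have hnm : n * m < 4 := by
    have : cosAngleSlopes k s ^ 2 < 1 := by nlinarith [neg_one_lt_cosAngleSlopes k s]
    rw [hc2, div_lt_one (by norm_num)] at this
    exact_mod_cast this
  rw [eq_neg_sqrt_nat_div_two hc hc2]
  exact arccos_neg_sqrt_nat_div_two_mem hnm

theorem stmt_2 (k s : ℝ) (hk : 0 < k) (hs : s < 0) (n m : ℕ)
    (h1 : (k * s + 1) / (k ^ 2 + 1) = -(n : ℝ) / 2)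
    (h2 : (k * s + 1) / (s ^ 2 + 1) = -(m : ℝ) / 2) :
    Real.arccos ((1 + k * s) / (Real.sqrt (1 + k ^ 2) * Real.sqrt (1 + s ^ 2))) ∈
      ({π / 2, 2 * π / 3, 3 * π / 4, 5 * π / 6} : Set ℝ) :=
  stmt_2_general k s n m h1 h2
end

section
/- If the angle between (1,k) and (1,s) (with k > 0 > s satisfying the integrability conditions (ks+1)/(k²+1) = -n/2, (ks+1)/(s²+1) = -m/2 with n,m ∈ ℕ) equals 2π/3, 3π/4, or 5π/6, then the ratio ‖(1,k)‖/‖(1,s)‖ equals 1, √2 or 1/√2, √3 or 1/√3, respectively. -/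
/-!
Put `a = 1 + k²`, `b = 1 + s²`, `p = 1 + k s`. The integrability conditions say
`p = -(n/2) a = -(m/2) b`, hence `n a = m b`, i.e. `n r² = m`, and `p² = (n m / 4) a b`, i.e.
`4 cos² θ = n m`. At the three angles `4 cos² θ` is `1`, `2`, `3`, so `{n, m} = {1, 1}`,
`{1, 2}`, `{1, 3}`, and `r² = m / n` gives the claimed ratios.
-/

open Real

lemma Real.cos_arccos_div_of_abs_le {x y : ℝ} (h : |x| ≤ y) : cos (arccos (x / y)) = x / y := by
  have hy : 0 ≤ y := (abs_nonneg x).trans h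
  have hxy : |x / y| ≤ 1 := by
    rw [abs_div, abs_of_nonneg hy]
    exact div_le_one_of_le₀ h hy
  exact cos_arccos (abs_le.mp hxy).1 (abs_le.mp hxy).2

lemma cos_arccos_one_add_mul_div (k s : ℝ) :
    cos (arccos ((1 + k * s) / (√(1 + k ^ 2) * √(1 + s ^ 2)))) =
      (1 + k * s) / (√(1 + k ^ 2) * √(1 + s ^ 2)) := by
  rw [← sqrt_mul (by positivity)]
  -- Lagrange's identity: `(1 + k²)(1 + s²) = (1 + k s)² + (k - s)²`
  exact cos_arccos_div_of_abs_le (abs_le_sqrt (by nlinarith [sq_nonneg (k - s)]))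

lemma four_mul_cos_angle_sq {k s : ℝ} {n m : ℕ}
    (h1 : (k * s + 1) / (k ^ 2 + 1) = -(n : ℝ) / 2)
    (h2 : (k * s + 1) / (s ^ 2 + 1) = -(m : ℝ) / 2) :
    4 * cos (arccos ((1 + k * s) / (√(1 + k ^ 2) * √(1 + s ^ 2)))) ^ 2 = n * m := by
  have e1 := (div_eq_iff (by positivity)).mp h1
  have e2 := (div_eq_iff (by positivity)).mp h2
  rw [cos_arccos_one_add_mul_div, div_pow, mul_pow, sq_sqrt (by positivity),
    sq_sqrt (by positivity), mul_div_assoc', div_eq_iff (by positivity)]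
  linear_combination 4 * ((k * s + 1) * e2 + (-(m : ℝ) / 2 * (s ^ 2 + 1)) * e1)

lemma natCast_mul_sqrt_div_sqrt_sq {k s : ℝ} {n m : ℕ}
    (h1 : (k * s + 1) / (k ^ 2 + 1) = -(n : ℝ) / 2)
    (h2 : (k * s + 1) / (s ^ 2 + 1) = -(m : ℝ) / 2) :
    n * (√(1 + k ^ 2) / √(1 + s ^ 2)) ^ 2 = m := by
  have e1 := (div_eq_iff (by positivity)).mp h1
  have e2 := (div_eq_iff (by positivity)).mp h2
  rw [div_pow, sq_sqrt (by positivity), sq_sqrt (by positivity), mul_div_assoc',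
    div_eq_iff (by positivity)]
  linarith

lemma eq_one_of_natCast_mul_sq_eq {r : ℝ} (hr : 0 ≤ r) {n m : ℕ} (hnm : n * m = 1)
    (h : n * r ^ 2 = m) : r = 1 := by
  obtain ⟨rfl, rfl⟩ := mul_eq_one.mp hnm
  simpa [pow_eq_one_iff_of_nonneg hr] using h

lemma eq_sqrt_or_eq_inv_sqrt_of_natCast_mul_sq_eq {r : ℝ} (hr : 0 ≤ r) {n m p : ℕ}
    (hp : p.Prime) (hnm : n * m = p) (h : n * r ^ 2 = m) : r = √p ∨ r = 1 / √p := by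
  subst hnm
  rcases Nat.prime_mul_iff.mp hp with ⟨-, rfl⟩ | ⟨-, rfl⟩
  · right
    rw [Nat.cast_one] at h
    rw [Nat.mul_one, one_div, ← sqrt_inv, ← sqrt_sq hr, eq_inv_of_mul_eq_one_right h]
  · left
    rw [Nat.cast_one, one_mul] at h
    rw [Nat.one_mul, ← h, sqrt_sq hr]

lemma four_mul_cos_sq_two_pi_div_three : 4 * cos (2 * π / 3) ^ 2 = 1 := by
  rw [show 2 * π / 3 = π - π / 3 by ring, cos_pi_sub, cos_pi_div_three]
  norm_num

lemma four_mul_cos_sq_three_pi_div_four : 4 * cos (3 * π / 4) ^ 2 = 2 := by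
  rw [show 3 * π / 4 = π - π / 4 by ring, cos_pi_sub, cos_pi_div_four, neg_sq, div_pow,
    sq_sqrt zero_le_two]
  norm_num

lemma four_mul_cos_sq_five_pi_div_six : 4 * cos (5 * π / 6) ^ 2 = 3 := by
  rw [show 5 * π / 6 = π - π / 6 by ring, cos_pi_sub, cos_pi_div_six, neg_sq, div_pow,
    sq_sqrt zero_le_three]
  norm_num

theorem stmt_3_general (k s : ℝ) (n m : ℕ)
    (h1 : (k * s + 1) / (k ^ 2 + 1) = -(n : ℝ) / 2)
    (h2 : (k * s + 1) / (s ^ 2 + 1) = -(m : ℝ) / 2)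
    (θ r : ℝ)
    (hθ : θ = Real.arccos ((1 + k * s) / (Real.sqrt (1 + k ^ 2) * Real.sqrt (1 + s ^ 2))))
    (hr : r = Real.sqrt (1 + k ^ 2) / Real.sqrt (1 + s ^ 2)) :
    (θ = 2 * π / 3 → r = 1) ∧
    (θ = 3 * π / 4 → r = Real.sqrt 2 ∨ r = 1 / Real.sqrt 2) ∧
    (θ = 5 * π / 6 → r = Real.sqrt 3 ∨ r = 1 / Real.sqrt 3) := by
  have hcos : 4 * cos θ ^ 2 = n * m := hθ ▸ four_mul_cos_angle_sq h1 h2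
  have hratio : n * r ^ 2 = m := hr ▸ natCast_mul_sqrt_div_sqrt_sq h1 h2
  have hr0 : 0 ≤ r := hr ▸ by positivity
  refine ⟨fun hθ' => ?_, fun hθ' => ?_, fun hθ' => ?_⟩
  · rw [hθ', four_mul_cos_sq_two_pi_div_three] at hcos
    exact eq_one_of_natCast_mul_sq_eq hr0 (by exact_mod_cast hcos.symm) hratio
  · rw [hθ', four_mul_cos_sq_three_pi_div_four] at hcos
    exact eq_sqrt_or_eq_inv_sqrt_of_natCast_mul_sq_eq hr0 Nat.prime_two
      (by exact_mod_cast hcos.symm) hratio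
  · rw [hθ', four_mul_cos_sq_five_pi_div_six] at hcos
    exact eq_sqrt_or_eq_inv_sqrt_of_natCast_mul_sq_eq hr0 Nat.prime_three
      (by exact_mod_cast hcos.symm) hratio

theorem stmt_3 (k s : ℝ) (hk : 0 < k) (hs : s < 0) (n m : ℕ)
    (h1 : (k * s + 1) / (k ^ 2 + 1) = -(n : ℝ) / 2)
    (h2 : (k * s + 1) / (s ^ 2 + 1) = -(m : ℝ) / 2)
    (θ r : ℝ)
    (hθ : θ = Real.arccos ((1 + k * s) / (Real.sqrt (1 + k ^ 2) * Real.sqrt (1 + s ^ 2))))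
    (hr : r = Real.sqrt (1 + k ^ 2) / Real.sqrt (1 + s ^ 2)) :
    (θ = 2 * π / 3 → r = 1) ∧
    (θ = 3 * π / 4 → r = Real.sqrt 2 ∨ r = 1 / Real.sqrt 2) ∧
    (θ = 5 * π / 6 → r = Real.sqrt 3 ∨ r = 1 / Real.sqrt 3) :=
  stmt_3_general k s n m h1 h2 θ r hθ hr
end

section
/- For the Hamiltonian H = ½(p₁²+p₂²) + e^{q₁} + e^{q₂−q₁} on ℝ⁴, the function I = p₁²p₂² + 2p₂²e^{q₁} − 2p₁p₂e^{q₂−q₁} + 2e^{q₂} + e^{2(q₂−q₁)} satisfies {H, I} = 0. -/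
noncomputable def H₁₀ (q₁ q₂ p₁ p₂ : ℝ) : ℝ :=
  (p₁ ^ 2 + p₂ ^ 2) / 2 + Real.exp q₁ + Real.exp (q₂ - q₁)

noncomputable def I₁₀ (q₁ q₂ p₁ p₂ : ℝ) : ℝ :=
  p₁ ^ 2 * p₂ ^ 2 + 2 * p₂ ^ 2 * Real.exp q₁ - 2 * p₁ * p₂ * Real.exp (q₂ - q₁) +
    2 * Real.exp q₂ + Real.exp (2 * (q₂ - q₁))

/-- Poisson bracket of two functions on ℝ⁴ with coordinates (q₁,q₂,p₁,p₂). -/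
noncomputable def pb4 (F G : ℝ → ℝ → ℝ → ℝ → ℝ) (q₁ q₂ p₁ p₂ : ℝ) : ℝ :=
  (deriv (fun x => F x q₂ p₁ p₂) q₁) * (deriv (fun x => G q₁ q₂ x p₂) p₁) -
  (deriv (fun x => F q₁ q₂ x p₂) p₁) * (deriv (fun x => G x q₂ p₁ p₂) q₁) +
  (deriv (fun x => F q₁ x p₁ p₂) q₂) * (deriv (fun x => G q₁ q₂ p₁ x) p₂) -
  (deriv (fun x => F q₁ q₂ p₁ x) p₂) * (deriv (fun x => G q₁ x p₁ p₂) q₂)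

/-!
Once the eight partial derivatives are computed, writing `e^{q₂} = e^{q₁} e^{q₂-q₁}` and
`e^{2(q₂-q₁)} = (e^{q₂-q₁})²` turns `{H, I}` into a polynomial in `p₁, p₂, e^{q₁}, e^{q₂-q₁}`
which vanishes identically.
-/

open Real

theorem pb4_eq_of_hasDerivAt {F G : ℝ → ℝ → ℝ → ℝ → ℝ} {q₁ q₂ p₁ p₂ : ℝ}
    {Fq₁ Fq₂ Fp₁ Fp₂ Gq₁ Gq₂ Gp₁ Gp₂ : ℝ}
    (hFq₁ : HasDerivAt (fun x => F x q₂ p₁ p₂) Fq₁ q₁)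
    (hFq₂ : HasDerivAt (fun x => F q₁ x p₁ p₂) Fq₂ q₂)
    (hFp₁ : HasDerivAt (fun x => F q₁ q₂ x p₂) Fp₁ p₁)
    (hFp₂ : HasDerivAt (fun x => F q₁ q₂ p₁ x) Fp₂ p₂)
    (hGq₁ : HasDerivAt (fun x => G x q₂ p₁ p₂) Gq₁ q₁)
    (hGq₂ : HasDerivAt (fun x => G q₁ x p₁ p₂) Gq₂ q₂)
    (hGp₁ : HasDerivAt (fun x => G q₁ q₂ x p₂) Gp₁ p₁)
    (hGp₂ : HasDerivAt (fun x => G q₁ q₂ p₁ x) Gp₂ p₂) :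
    pb4 F G q₁ q₂ p₁ p₂ = Fq₁ * Gp₁ - Fp₁ * Gq₁ + Fq₂ * Gp₂ - Fp₂ * Gq₂ := by
  rw [pb4, hFq₁.deriv, hFq₂.deriv, hFp₁.deriv, hFp₂.deriv, hGq₁.deriv, hGq₂.deriv, hGp₁.deriv,
    hGp₂.deriv]

theorem hasDerivAt_exp_const_sub (a x : ℝ) :
    HasDerivAt (fun y => exp (a - y)) (-exp (a - x)) x := by
  simpa using ((hasDerivAt_id x).const_sub a).exp

theorem hasDerivAt_exp_sub_const (a x : ℝ) :
    HasDerivAt (fun y => exp (y - a)) (exp (x - a)) x := by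
  simpa using ((hasDerivAt_id x).sub_const a).exp

section PartialDerivatives

variable (q₁ q₂ p₁ p₂ : ℝ)

theorem hasDerivAt_H₁₀_q₁ :
    HasDerivAt (fun x => H₁₀ x q₂ p₁ p₂) (exp q₁ - exp (q₂ - q₁)) q₁ := by
  unfold H₁₀
  exact (((hasDerivAt_const q₁ _).add (hasDerivAt_exp q₁)).add
    (hasDerivAt_exp_const_sub q₂ q₁)).congr_deriv (by ring)

theorem hasDerivAt_H₁₀_q₂ : HasDerivAt (fun x => H₁₀ q₁ x p₁ p₂) (exp (q₂ - q₁)) q₂ := by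
  unfold H₁₀
  exact (hasDerivAt_exp_sub_const q₁ q₂).const_add _

theorem hasDerivAt_H₁₀_p₁ : HasDerivAt (fun x => H₁₀ q₁ q₂ x p₂) p₁ p₁ := by
  unfold H₁₀
  exact (((((hasDerivAt_pow 2 p₁).add_const _).div_const 2).add_const _).add_const _).congr_deriv
    (by ring)

theorem hasDerivAt_H₁₀_p₂ : HasDerivAt (fun x => H₁₀ q₁ q₂ p₁ x) p₂ p₂ := by
  unfold H₁₀
  exact (((((hasDerivAt_pow 2 p₂).const_add _).div_const 2).add_const _).add_const _).congr_deriv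
    (by ring)

theorem hasDerivAt_I₁₀_q₁ :
    HasDerivAt (fun x => I₁₀ x q₂ p₁ p₂)
      (2 * p₂ ^ 2 * exp q₁ + 2 * p₁ * p₂ * exp (q₂ - q₁) - 2 * exp (2 * (q₂ - q₁))) q₁ := by
  unfold I₁₀
  have hsq : HasDerivAt (fun x => exp (2 * (q₂ - x))) (-2 * exp (2 * (q₂ - q₁))) q₁ := by
    simpa [mul_comm] using (((hasDerivAt_id q₁).const_sub q₂).const_mul 2).exp
  exact (((((hasDerivAt_const q₁ _).add ((hasDerivAt_exp q₁).const_mul _)).sub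
    ((hasDerivAt_exp_const_sub q₂ q₁).const_mul _)).add_const _).add hsq).congr_deriv (by ring)

theorem hasDerivAt_I₁₀_q₂ :
    HasDerivAt (fun x => I₁₀ q₁ x p₁ p₂)
      (-2 * p₁ * p₂ * exp (q₂ - q₁) + 2 * exp q₂ + 2 * exp (2 * (q₂ - q₁))) q₂ := by
  unfold I₁₀
  have hsq : HasDerivAt (fun x => exp (2 * (x - q₁))) (2 * exp (2 * (q₂ - q₁))) q₂ := by
    simpa [mul_comm] using (((hasDerivAt_id q₂).sub_const q₁).const_mul 2).exp
  exact (((((hasDerivAt_const q₂ _).sub ((hasDerivAt_exp_sub_const q₁ q₂).const_mul _)).add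
    ((hasDerivAt_exp q₂).const_mul 2)).add hsq)).congr_deriv (by ring)

theorem hasDerivAt_I₁₀_p₁ :
    HasDerivAt (fun x => I₁₀ q₁ q₂ x p₂) (2 * p₁ * p₂ ^ 2 - 2 * p₂ * exp (q₂ - q₁)) p₁ := by
  unfold I₁₀
  exact (((((hasDerivAt_pow 2 p₁).mul_const _).add_const _).sub
    ((((hasDerivAt_id' p₁).const_mul 2).mul_const p₂).mul_const _)).add_const _).add_const _
    |>.congr_deriv (by ring)

theorem hasDerivAt_I₁₀_p₂ :
    HasDerivAt (fun x => I₁₀ q₁ q₂ p₁ x)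
      (2 * p₁ ^ 2 * p₂ + 4 * p₂ * exp q₁ - 2 * p₁ * exp (q₂ - q₁)) p₂ := by
  unfold I₁₀
  exact (((((hasDerivAt_pow 2 p₂).const_mul _).add
    (((hasDerivAt_pow 2 p₂).const_mul 2).mul_const _)).sub
    (((hasDerivAt_id' p₂).const_mul _).mul_const _)).add_const _).add_const _
    |>.congr_deriv (by ring)

end PartialDerivatives

theorem stmt_10 (q₁ q₂ p₁ p₂ : ℝ) : pb4 H₁₀ I₁₀ q₁ q₂ p₁ p₂ = 0 := by
  rw [pb4_eq_of_hasDerivAt (hasDerivAt_H₁₀_q₁ ..) (hasDerivAt_H₁₀_q₂ ..) (hasDerivAt_H₁₀_p₁ ..)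
    (hasDerivAt_H₁₀_p₂ ..) (hasDerivAt_I₁₀_q₁ ..) (hasDerivAt_I₁₀_q₂ ..) (hasDerivAt_I₁₀_p₁ ..)
    (hasDerivAt_I₁₀_p₂ ..)]
  have exp_q₂ : exp q₂ = exp q₁ * exp (q₂ - q₁) := by rw [← exp_add, add_sub_cancel]
  have exp_two_mul : exp (2 * (q₂ - q₁)) = exp (q₂ - q₁) ^ 2 := by rw [← exp_nat_mul]; norm_num
  rw [exp_q₂, exp_two_mul]
  ring
end

section
/- Let D = Σⱼ λⱼ Xⱼ ∂/∂Xⱼ be the derivation on ℂ[X₁,…,Xₘ] with λ₁,…,λₘ non-resonant (no nonzero integer relation Σ nⱼλⱼ = 0 with (nⱼ) ∈ ℤᵐ∖{0}). Then every irreducible Darboux polynomial of D (i.e. irreducible P with D(P) = cP for some c ∈ ℂ) is a monomial, i.e. one of the variables Xⱼ up to scalar. -/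
/-!
On the monomial `X^d` the derivation `D = ∑ λⱼ Xⱼ ∂ⱼ` acts as multiplication by the weight
`∑ dⱼ λⱼ`, so `D P = c P` says exactly that `P` is weighted homogeneous of weight `c` for the
weights `λ`. Non-resonance makes the weight of an exponent vector determine it, so such a `P` is a
single monomial `a X^d`; splitting off a variable shows that an irreducible monomial has `d = eⱼ`.
-/

open MvPolynomial Finsupp

namespace MvPolynomial

variable {σ R : Type*}

section CommSemiring

variable [CommSemiring R]

theorem coeff_X_mul_pderiv (i : σ) (p : MvPolynomial σ R) (d : σ →₀ ℕ) :
    coeff d (X i * pderiv i p) = d i * coeff d p := by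
  classical
  induction p using MvPolynomial.induction_on' with
  | monomial e a =>
    rw [X_mul_pderiv_monomial, coeff_smul, coeff_monomial]
    split_ifs with h
    · rw [h, nsmul_eq_mul]
    · simp
  | add p q hp hq => rw [map_add, mul_add, coeff_add, hp, hq, coeff_add, mul_add]

theorem coeff_sum_C_mul_X_mul_pderiv [Fintype σ] (w : σ → R) (p : MvPolynomial σ R)
    (d : σ →₀ ℕ) :
    coeff d (∑ j, C (w j) * X j * pderiv j p) = weight w d * coeff d p := by
  simp only [coeff_sum, mul_assoc, coeff_C_mul, coeff_X_mul_pderiv, weight_eq_sum, nsmul_eq_mul,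
    Finset.sum_mul]
  exact Finset.sum_congr rfl fun j _ => by ring

theorem not_isUnit_monomial [Nontrivial R] {e : σ →₀ ℕ} (he : e ≠ 0) (a : R) :
    ¬IsUnit (monomial e a) := by
  classical
  intro hu
  simpa [constantCoeff_monomial, he] using hu.map constantCoeff

end CommSemiring

theorem isWeightedHomogeneous_of_sum_C_mul_X_mul_pderiv_eq [CommRing R] [IsDomain R] [Fintype σ]
    {w : σ → R} {p : MvPolynomial σ R} {c : R}
    (h : ∑ j, C (w j) * X j * pderiv j p = C c * p) :
    IsWeightedHomogeneous w p c := by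
  intro d hd
  have hcoeff := congrArg (coeff d) h
  rw [coeff_sum_C_mul_X_mul_pderiv, coeff_C_mul] at hcoeff
  exact mul_right_cancel₀ hd hcoeff

theorem IsWeightedHomogeneous.eq_monomial_of_mem_support [CommSemiring R] {M : Type*}
    [AddCommMonoid M] {w : σ → M} (hw : Function.Injective (weight w : (σ →₀ ℕ) → M))
    {p : MvPolynomial σ R} {m : M} (hp : IsWeightedHomogeneous w p m) {d : σ →₀ ℕ}
    (hd : d ∈ p.support) :
    p = monomial d (coeff d p) := by
  classical
  ext e
  rw [coeff_monomial]
  split_ifs with hde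
  · rw [hde]
  · by_contra he
    exact hde (hw ((hp (mem_support_iff.mp hd)).trans (hp he).symm))

theorem exists_eq_single_of_irreducible_monomial {K : Type*} [Field K] {d : σ →₀ ℕ} {a : K}
    (h : Irreducible (monomial d a)) : ∃ j, d = single j 1 := by
  have ha : a ≠ 0 := by
    rintro rfl
    exact h.ne_zero monomial_zero
  obtain ⟨j, hj⟩ : ∃ j, d j ≠ 0 := by
    by_contra! hd
    apply h.not_isUnit
    rw [show d = 0 from Finsupp.ext hd, monomial_zero']
    exact (isUnit_iff_ne_zero.mpr ha).map C
  have hsplit : monomial d a = X j * monomial (d - single j 1) a := by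
    rw [← pow_one (X j), ← monomial_single_add, add_comm, sub_add_single_one_cancel hj]
  refine ⟨j, ?_⟩
  rcases h.isUnit_or_isUnit hsplit with hX | hrest
  · exact absurd hX (not_isUnit_monomial (single_ne_zero.mpr one_ne_zero) 1)
  · have hrest0 : d - single j 1 = 0 := by
      by_contra hne
      exact not_isUnit_monomial hne a hrest
    rw [← sub_add_single_one_cancel hj, hrest0, zero_add]

end MvPolynomial

theorem Finsupp.weight_injective_of_nonresonant {σ R : Type*} [Fintype σ] [CommRing R]
    {w : σ → R} (hw : ∀ n : σ → ℤ, n ≠ 0 → ∑ j, (n j : R) * w j ≠ 0) :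
    Function.Injective (weight w : (σ →₀ ℕ) → R) := by
  intro d e hde
  by_contra hne
  refine hw (fun j => (d j : ℤ) - e j) (fun h0 => hne (Finsupp.ext fun k => ?_)) ?_
  · simpa [sub_eq_zero] using congrFun h0 k
  · simpa [weight_eq_sum, sub_mul, Finset.sum_sub_distrib, sub_eq_zero] using hde

theorem stmt_14 (m : ℕ) (lam : Fin m → ℂ)
    (hnr : ∀ n : Fin m → ℤ, n ≠ 0 → ∑ j, (n j : ℂ) * lam j ≠ 0)
    (P : MvPolynomial (Fin m) ℂ) (hP : Irreducible P) (c : ℂ)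
    (hD : ∑ j, C (lam j) * X j * pderiv j P = C c * P) :
    ∃ (j : Fin m) (a : ℂ), P = C a * X j := by
  obtain ⟨d, hd⟩ : P.support.Nonempty := support_nonempty.mpr hP.ne_zero
  have hmono := (isWeightedHomogeneous_of_sum_C_mul_X_mul_pderiv_eq hD).eq_monomial_of_mem_support
    (weight_injective_of_nonresonant hnr) hd
  rw [hmono] at hP ⊢
  obtain ⟨j, rfl⟩ := exists_eq_single_of_irreducible_monomial hP
  exact ⟨j, coeff (single j 1) P, C_mul_X_eq_monomial.symm⟩
end
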